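/- arXiv:1806.09498 — 5 statements merged into one kernel-verified Lean document; each statement's English description precedes it below -/
import Mathlib

section
/- Let $f: \mathbb{R}^N \to \mathbb{R}$ be nonnegative with $(1+|v|^2)f \in L^1(\mathbb{R}^N)$, and define $n = \int f\,dv$, $u = \frac{1}{n}\int v f\,dv$, $T = \frac{m}{Nn}\int |v-u|^2 f\,dv$ (assuming $n > 0$). If $N_0(f) = \sup_v f(v) < \infty$, then there is a constant $C$ depending only on $N$ and $m$ such that $n/T^{N/2} \le C\, N_0(f)$. -/
/-!
Split the mass at the ball of radius `R` around the mean velocity `u`. Inside, `f ≤ N₀(f)`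
bounds the mass by `N₀(f) |B_R| = N₀(f) |B_1| R^N`; outside, Chebyshev's inequality bounds it
by `R⁻² ∫ |v - u|² f = N n T / (m R²)`. The radius with `R² = 2 N T / m` makes the outer
part `n / 2`, so `n ≤ 2 N₀(f) |B_1| (2 N T / m)^(N/2)`.
-/

open MeasureTheory Metric Real

section Moments

variable {E : Type*} [NormedAddCommGroup E] [MeasurableSpace E] [OpensMeasurableSpace E]
  {μ : Measure E}

theorem MeasureTheory.Integrable.mul_of_abs_le_mul_one_add_sq {f h : E → ℝ} {C : ℝ}
    (hint : Integrable (fun v => (1 + ‖v‖ ^ 2) * f v) μ) (hh : Continuous h)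
    (hbound : ∀ v, |h v| ≤ C * (1 + ‖v‖ ^ 2)) :
    Integrable (fun v => h v * f v) μ := by
  have hpos : ∀ v : E, 0 < 1 + ‖v‖ ^ 2 := fun v => by positivity
  have hweight : Continuous fun v : E => h v / (1 + ‖v‖ ^ 2) :=
    hh.div (by fun_prop) fun v => (hpos v).ne'
  refine (hint.bdd_mul hweight.aestronglyMeasurable (c := C)
    (ae_of_all _ fun v => ?_)).congr (ae_of_all _ fun v => ?_)
  · rw [Real.norm_eq_abs, abs_div, abs_of_pos (hpos v), div_le_iff₀ (hpos v)]
    exact hbound v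
  · field_simp [(hpos v).ne']

theorem MeasureTheory.Integrable.of_one_add_sq_mul {f : E → ℝ}
    (hint : Integrable (fun v => (1 + ‖v‖ ^ 2) * f v) μ) : Integrable f μ := by
  simpa using hint.mul_of_abs_le_mul_one_add_sq (h := 1) (C := 1) continuous_const
    fun v => by simp [sq_nonneg ‖v‖]

theorem MeasureTheory.Integrable.sq_norm_sub_mul_of_one_add_sq_mul {f : E → ℝ}
    (hint : Integrable (fun v => (1 + ‖v‖ ^ 2) * f v) μ) (u : E) :
    Integrable (fun v => ‖v - u‖ ^ 2 * f v) μ :=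
  hint.mul_of_abs_le_mul_one_add_sq (C := 2 * (1 + ‖u‖ ^ 2)) (by fun_prop) fun v => by
    rw [abs_of_nonneg (by positivity)]
    nlinarith [norm_sub_le v u, norm_nonneg (v - u), sq_nonneg (‖v‖ - ‖u‖),
      sq_nonneg (‖v‖ * ‖u‖)]

theorem integral_le_mul_measureReal_closedBall_add [ProperSpace E] [IsFiniteMeasureOnCompacts μ]
    {f : E → ℝ} {M R : ℝ} (u : E) (hf0 : ∀ v, 0 ≤ f v) (hfM : ∀ v, f v ≤ M)
    (hf : Integrable f μ) (hmom : Integrable (fun v => ‖v - u‖ ^ 2 * f v) μ) (hR : 0 < R) :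
    ∫ v, f v ∂μ ≤
      M * μ.real (closedBall u R) + (∫ v, ‖v - u‖ ^ 2 * f v ∂μ) / R ^ 2 := by
  have hB : MeasurableSet (closedBall u R) := measurableSet_closedBall
  have inner : ∫ v in closedBall u R, f v ∂μ ≤ M * μ.real (closedBall u R) := by
    calc ∫ v in closedBall u R, f v ∂μ ≤ ∫ _ in closedBall u R, M ∂μ :=
          setIntegral_mono_on hf.integrableOn
            (integrableOn_const (isCompact_closedBall u R).measure_ne_top) hB fun v _ => hfM v
      _ = M * μ.real (closedBall u R) := by rw [setIntegral_const, smul_eq_mul, mul_comm]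
  have outer :
      ∫ v in (closedBall u R)ᶜ, f v ∂μ ≤ (∫ v, ‖v - u‖ ^ 2 * f v ∂μ) / R ^ 2 := by
    rw [← integral_div]
    calc ∫ v in (closedBall u R)ᶜ, f v ∂μ
        ≤ ∫ v in (closedBall u R)ᶜ, ‖v - u‖ ^ 2 * f v / R ^ 2 ∂μ := by
          refine setIntegral_mono_on hf.integrableOn (hmom.div_const _).integrableOn hB.compl
            fun v hv => ?_
          have hRv : R ^ 2 ≤ ‖v - u‖ ^ 2 := by
            rw [Set.mem_compl_iff, mem_closedBall, not_le, dist_eq_norm] at hv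
            gcongr
          rw [le_div_iff₀ (by positivity)]
          exact mul_le_mul_of_nonneg_left hRv (hf0 v) |>.trans_eq (mul_comm _ _)
      _ ≤ ∫ v, ‖v - u‖ ^ 2 * f v / R ^ 2 ∂μ :=
          setIntegral_le_integral (hmom.div_const _) (ae_of_all _ fun v => by
            have := hf0 v
            positivity)
  rw [← integral_add_compl hB hf]
  exact add_le_add inner outer

end Moments

theorem EuclideanSpace.volume_real_closedBall_fin {N : ℕ} (hN : 1 ≤ N)
    (u : EuclideanSpace ℝ (Fin N)) {R : ℝ} (hR : 0 ≤ R) :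
    volume.real (closedBall u R) = R ^ N * (√π ^ N / Gamma (N / 2 + 1)) := by
  have : Nonempty (Fin N) := ⟨⟨0, hN⟩⟩
  rw [measureReal_def, EuclideanSpace.volume_closedBall, Fintype.card_fin, ENNReal.toReal_mul,
    ENNReal.toReal_pow, ENNReal.toReal_ofReal hR, ENNReal.toReal_ofReal (by positivity)]

/-- Estimate (i.1): `n / T^(N/2) ≤ C N₀(f)` with `C` depending only on `N` and `m`. -/
theorem stmt_0 (N : ℕ) (hN : 1 ≤ N) (m : ℝ) (hm : 0 < m) :
    ∃ C : ℝ, ∀ (f : EuclideanSpace ℝ (Fin N) → ℝ) (n T N0 : ℝ)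
      (u : EuclideanSpace ℝ (Fin N)),
      (∀ v, 0 ≤ f v) →
      Integrable (fun v => (1 + ‖v‖ ^ 2) * f v) →
      n = ∫ v, f v →
      0 < n →
      u = n⁻¹ • ∫ v, f v • v →
      T = m / (N * n) * ∫ v, ‖v - u‖ ^ 2 * f v →
      BddAbove (Set.range f) →
      N0 = ⨆ v, f v →
      n / T ^ ((N : ℝ) / 2) ≤ C * N0 := by
  have hNpos : (0 : ℝ) < N := by exact_mod_cast hN
  refine ⟨2 * (√π ^ N / Gamma (N / 2 + 1)) * (2 * N / m) ^ ((N : ℝ) / 2), ?_⟩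
  intro f n T N0 u hf hint hn hnpos _ hT hbdd hN0
  have hfN0 : ∀ v, f v ≤ N0 := fun v => hN0 ▸ le_ciSup hbdd v
  have hI0 : 0 ≤ ∫ v, ‖v - u‖ ^ 2 * f v :=
    integral_nonneg fun v => mul_nonneg (by positivity) (hf v)
  have hT0 : 0 ≤ T := hT ▸ by positivity
  rcases hT0.eq_or_lt with rfl | hTpos
  · rw [zero_rpow (by positivity), div_zero]
    have := (hf u).trans (hfN0 u)
    positivity
  set R := √(2 * N * T / m) with hRdef
  have hR : 0 < R := sqrt_pos.mpr (by positivity)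
  have hR2 : (∫ v, ‖v - u‖ ^ 2 * f v) / R ^ 2 = n / 2 := by
    have hI : ∫ v, ‖v - u‖ ^ 2 * f v = N * n * T / m := by
      rw [hT]
      field_simp
    rw [sq_sqrt (by positivity), hI]
    field_simp
  have hRN : R ^ N = (2 * N / m) ^ ((N : ℝ) / 2) * T ^ ((N : ℝ) / 2) := by
    rw [hRdef, ← rpow_natCast, ← rpow_div_two_eq_sqrt _ (by positivity), mul_div_right_comm,
      mul_rpow (by positivity) hT0]
  have key := integral_le_mul_measureReal_closedBall_add u hf hfN0
    hint.of_one_add_sq_mul (hint.sq_norm_sub_mul_of_one_add_sq_mul u) hR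
  rw [← hn, hR2, EuclideanSpace.volume_real_closedBall_fin hN u hR.le, hRN] at key
  rw [div_le_iff₀ (rpow_pos_of_pos hTpos _)]
  linarith
end

section
/- Let $f \ge 0$ with $(1+|v|^2)f \in L^1(\mathbb{R}^N)$ and moments $n, u, T$ defined as usual, with $n > 0$. Let $q > N + 2$ and $N_q(f) := \sup_v |v|^q f(v) < \infty$. Then there is a constant $C_q$ such that $n (T + |u|^2)^{(q-N)/2} \le C_q N_q(f)$. -/
/-!
Split the second moment `∫ |v|² f` at a radius `R`. Inside the ball it is at most `R² n`;
outside, `f ≤ N_q(f) |v|^(-q)` and, by scaling, `∫_{|v| ≥ R} |v|^(2-q) = c R^(N+2-q)` with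
`c < ∞` because `q > N + 2`. The choice `R^(q-N) = N_q(f) / n` gives
`∫ |v|² f ≤ (1 + c) n (N_q(f) / n)^(2/(q-N))`. Since `∫ |v - u|² f = ∫ |v|² f - n |u|²`, the
quantity `n (T + |u|²)` is at most `max (m/N) 1 * ∫ |v|² f`; raise to the power `(q-N)/2`.
-/

open MeasureTheory Real Module Pointwise

section Integrability

variable {E : Type*} [NormedAddCommGroup E] [MeasurableSpace E] [OpensMeasurableSpace E]
  {μ : Measure E} {f : E → ℝ}

theorem MeasureTheory.Integrable.of_one_add_norm_sq_mul
    (h : Integrable (fun v => (1 + ‖v‖ ^ 2) * f v) μ) : Integrable f μ := by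
  have hbdd := h.bdd_mul (f := fun v => (1 + ‖v‖ ^ 2)⁻¹) (c := 1) (by fun_prop)
    (ae_of_all _ fun v => by
      rw [norm_inv, Real.norm_of_nonneg (by positivity)]
      exact inv_le_one_of_one_le₀ (by nlinarith [sq_nonneg ‖v‖]))
  refine hbdd.congr (ae_of_all _ fun v => ?_)
  simp only
  field_simp

theorem MeasureTheory.Integrable.norm_sq_mul_of_one_add_norm_sq_mul
    (h : Integrable (fun v => (1 + ‖v‖ ^ 2) * f v) μ) :
    Integrable (fun v => ‖v‖ ^ 2 * f v) μ := by
  have hbdd := h.bdd_mul (f := fun v => ‖v‖ ^ 2 / (1 + ‖v‖ ^ 2)) (c := 1)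
    (Measurable.aestronglyMeasurable (by fun_prop))
    (ae_of_all _ fun v => by
      rw [Real.norm_of_nonneg (by positivity)]
      exact div_le_one_of_le₀ (by linarith) (by positivity))
  refine hbdd.congr (ae_of_all _ fun v => ?_)
  simp only
  field_simp

theorem MeasureTheory.Integrable.smul_self_of_one_add_norm_sq_mul [NormedSpace ℝ E]
    [SecondCountableTopology E] (h : Integrable (fun v => (1 + ‖v‖ ^ 2) * f v) μ) :
    Integrable (fun v => f v • v) μ := by
  have hbdd := h.smul_bdd (f := fun v => (1 + ‖v‖ ^ 2)⁻¹ • v) 1 (by fun_prop)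
    (ae_of_all _ fun v => by
      rw [norm_smul, norm_inv, Real.norm_of_nonneg (by positivity),
        inv_mul_le_iff₀ (by positivity)]
      nlinarith [sq_nonneg (‖v‖ - 1)])
  refine hbdd.congr (ae_of_all _ fun v => ?_)
  simp only [Pi.smul_apply', smul_smul]
  congr 1
  field_simp

end Integrability

theorem nonneg_of_forall_norm_rpow_mul_le {E : Type*} [NormedAddCommGroup E] {f : E → ℝ}
    {q K : ℝ} (hq : q ≠ 0) (hK : ∀ v, ‖v‖ ^ q * f v ≤ K) : 0 ≤ K := by
  simpa [Real.zero_rpow hq] using hK 0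

theorem le_mul_div_rpow_of_forall_le {I n K c p : ℝ} (hn : 0 < n) (hK : 0 < K) (hp : 0 < p)
    (h : ∀ R > 0, I ≤ R ^ 2 * n + K * R ^ (2 - p) * c) :
    I ≤ (1 + c) * n * (K / n) ^ (2 / p) := by
  -- the radius with `R ^ p = K / n` makes the two terms equal
  set x := K / n
  have hx : 0 < x := div_pos hK hn
  have hsq : (x ^ (1 / p)) ^ 2 = x ^ (2 / p) := by
    rw [← Real.rpow_natCast, ← Real.rpow_mul hx.le]; ring_nf
  have htail : K * (x ^ (1 / p)) ^ (2 - p) = n * x ^ (2 / p) := by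
    rw [← Real.rpow_mul hx.le, show 1 / p * (2 - p) = 2 / p + -1 by field_simp; ring,
      Real.rpow_add hx, Real.rpow_neg_one, show K = x * n from (div_mul_cancel₀ K hn.ne').symm]
    field_simp
  have := h _ (Real.rpow_pos_of_pos hx (1 / p))
  rw [hsq, htail] at this
  linarith

section HaarMeasure

variable {E : Type*} [NormedAddCommGroup E] [NormedSpace ℝ E] [FiniteDimensional ℝ E]
  [MeasurableSpace E] [BorelSpace E] {μ : Measure E} [μ.IsAddHaarMeasure]

theorem integrableOn_norm_rpow_setOf_le_norm {r R : ℝ} (hr : r < -finrank ℝ E) (hR : 0 < R) :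
    IntegrableOn (fun w : E => ‖w‖ ^ r) {w | R ≤ ‖w‖} μ := by
  have hdom := ((integrable_one_add_norm (μ := μ) (r := -r) (by linarith)).const_mul
    ((R / (1 + R)) ^ r)).integrableOn (s := {w | R ≤ ‖w‖})
  refine hdom.mono' (Measurable.aestronglyMeasurable (by fun_prop))
    ((ae_restrict_iff' (measurableSet_le (by fun_prop) (by fun_prop))).2
      (ae_of_all _ fun w (hw : R ≤ ‖w‖) => ?_))
  have hlow : R / (1 + R) * (1 + ‖w‖) ≤ ‖w‖ := by
    rw [div_mul_eq_mul_div, div_le_iff₀ (by positivity)]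
    nlinarith
  rw [Real.norm_of_nonneg (by positivity), neg_neg,
    ← Real.mul_rpow (by positivity) (by positivity)]
  exact Real.rpow_le_rpow_of_nonpos (by positivity) hlow
    (by linarith [(finrank ℝ E).cast_nonneg (α := ℝ)])

theorem setIntegral_norm_rpow_setOf_le_norm (r : ℝ) {R : ℝ} (hR : 0 < R) :
    ∫ w in {w : E | R ≤ ‖w‖}, ‖w‖ ^ r ∂μ =
      R ^ (finrank ℝ E + r) * ∫ w in {w : E | 1 ≤ ‖w‖}, ‖w‖ ^ r ∂μ := by
  have hset : R • {w : E | 1 ≤ ‖w‖} = {w | R ≤ ‖w‖} := by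
    ext w
    rw [Set.mem_smul_set_iff_inv_smul_mem₀ hR.ne', Set.mem_ofPred_eq, Set.mem_ofPred_eq,
      norm_smul, norm_inv, Real.norm_of_nonneg hR.le, inv_mul_eq_div, one_le_div hR]
  have h := Measure.setIntegral_comp_smul μ (fun w : E => ‖w‖ ^ r) {w | 1 ≤ ‖w‖} hR.ne'
  simp only [norm_smul, Real.norm_of_nonneg hR.le, Real.mul_rpow hR.le (norm_nonneg _),
    integral_const_mul, hset, smul_eq_mul] at h
  rw [abs_of_pos (by positivity), ← Real.rpow_natCast] at h
  rw [Real.rpow_add hR, mul_assoc, h, mul_inv_cancel_left₀ (by positivity)]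

variable {f : E → ℝ} {q K : ℝ}

theorem integral_norm_sq_mul_le_of_norm_rpow_mul_le (hf : 0 ≤ f) (hfi : Integrable f μ)
    (hf2 : Integrable (fun v => ‖v‖ ^ 2 * f v) μ) (hK : ∀ v, ‖v‖ ^ q * f v ≤ K)
    (hq : finrank ℝ E + 2 < q) {R : ℝ} (hR : 0 < R) :
    ∫ v, ‖v‖ ^ 2 * f v ∂μ ≤ R ^ 2 * ∫ v, f v ∂μ +
      K * R ^ (finrank ℝ E + 2 - q) * ∫ w in {w : E | 1 ≤ ‖w‖}, ‖w‖ ^ (2 - q) ∂μ := by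
  set s := {w : E | R ≤ ‖w‖}
  have hs : MeasurableSet s := measurableSet_le measurable_const measurable_norm
  have hinner : ∫ v in sᶜ, ‖v‖ ^ 2 * f v ∂μ ≤ R ^ 2 * ∫ v, f v ∂μ := calc
    _ ≤ ∫ v in sᶜ, R ^ 2 * f v ∂μ :=
      setIntegral_mono_on hf2.integrableOn (hfi.const_mul _).integrableOn hs.compl
        fun v (hv : ¬ R ≤ ‖v‖) =>
          mul_le_mul_of_nonneg_right (pow_le_pow_left₀ (norm_nonneg v) (not_le.1 hv).le 2) (hf v)
    _ = R ^ 2 * ∫ v in sᶜ, f v ∂μ := integral_const_mul _ _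
    _ ≤ R ^ 2 * ∫ v, f v ∂μ :=
      mul_le_mul_of_nonneg_left (setIntegral_le_integral hfi (ae_of_all _ hf)) (sq_nonneg R)
  have htail : ∫ v in s, ‖v‖ ^ 2 * f v ∂μ ≤ K * ∫ v in s, ‖v‖ ^ (2 - q) ∂μ := calc
    _ ≤ ∫ v in s, K * ‖v‖ ^ (2 - q) ∂μ := by
      refine setIntegral_mono_on hf2.integrableOn
        ((integrableOn_norm_rpow_setOf_le_norm (by linarith) hR).const_mul K) hs
        fun v (hv : R ≤ ‖v‖) => ?_
      calc ‖v‖ ^ 2 * f v = ‖v‖ ^ (2 - q) * (‖v‖ ^ q * f v) := by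
            rw [← mul_assoc, ← Real.rpow_add (hR.trans_le hv), sub_add_cancel, Real.rpow_two]
        _ ≤ ‖v‖ ^ (2 - q) * K := by gcongr; exact hK v
        _ = K * ‖v‖ ^ (2 - q) := mul_comm _ _
    _ = K * ∫ v in s, ‖v‖ ^ (2 - q) ∂μ := integral_const_mul _ _
  rw [setIntegral_norm_rpow_setOf_le_norm _ hR] at htail
  rw [← integral_add_compl hs hf2, add_sub_assoc]
  linarith

theorem integral_norm_sq_mul_le (hf : 0 ≤ f) (hfi : Integrable f μ)
    (hf2 : Integrable (fun v => ‖v‖ ^ 2 * f v) μ) (hK : ∀ v, ‖v‖ ^ q * f v ≤ K)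
    (hq : finrank ℝ E + 2 < q) (hn : 0 < ∫ v, f v ∂μ) :
    ∫ v, ‖v‖ ^ 2 * f v ∂μ ≤ (1 + ∫ w in {w : E | 1 ≤ ‖w‖}, ‖w‖ ^ (2 - q) ∂μ) *
      (∫ v, f v ∂μ) * (K / ∫ v, f v ∂μ) ^ (2 / (q - finrank ℝ E)) := by
  have hd : (0 : ℝ) ≤ finrank ℝ E := (finrank ℝ E).cast_nonneg
  rcases (nonneg_of_forall_norm_rpow_mul_le (by linarith) hK).eq_or_lt with rfl | hKpos
  · -- `K = 0` forces `f = 0` away from the origin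
    have hzero : ∀ v, ‖v‖ ^ 2 * f v = 0 := fun v => by
      rcases eq_or_ne v 0 with rfl | hv
      · simp
      · have hfv : f v = 0 := le_antisymm
          (nonpos_of_mul_nonpos_right (hK v) (Real.rpow_pos_of_pos (norm_pos_iff.2 hv) q)) (hf v)
        rw [hfv, mul_zero]
    simp [hzero, Real.zero_rpow (by apply div_ne_zero <;> linarith : 2 / (q - finrank ℝ E) ≠ 0)]
  · refine le_mul_div_rpow_of_forall_le hn hKpos (by linarith) fun R hR => ?_
    rw [show (2 : ℝ) - (q - finrank ℝ E) = finrank ℝ E + 2 - q by ring]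
    exact integral_norm_sq_mul_le_of_norm_rpow_mul_le hf hfi hf2 hK hq hR

end HaarMeasure

section Variance

variable {E : Type*} [NormedAddCommGroup E] [InnerProductSpace ℝ E] [CompleteSpace E]
  [MeasurableSpace E] {μ : Measure E} {f : E → ℝ} {u : E}

theorem integral_norm_sub_sq_mul (hfi : Integrable f μ)
    (hf2 : Integrable (fun v => ‖v‖ ^ 2 * f v) μ) (hfv : Integrable (fun v => f v • v) μ)
    (hu : ∫ v, f v • v ∂μ = (∫ v, f v ∂μ) • u) :
    ∫ v, ‖v - u‖ ^ 2 * f v ∂μ = ∫ v, ‖v‖ ^ 2 * f v ∂μ - (∫ v, f v ∂μ) * ‖u‖ ^ 2 := by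
  have hexpand : (fun v => ‖v - u‖ ^ 2 * f v) =
      fun v => ‖v‖ ^ 2 * f v - 2 * inner ℝ u (f v • v) + ‖u‖ ^ 2 * f v := by
    funext v
    rw [norm_sub_sq_real, real_inner_smul_right, real_inner_comm]
    ring
  have hinner := (hfv.const_inner (𝕜 := ℝ) u).const_mul 2
  have hsub : Integrable (fun v => ‖v‖ ^ 2 * f v - 2 * inner ℝ u (f v • v)) μ := hf2.sub hinner
  rw [hexpand, integral_add hsub (hfi.const_mul _), integral_sub hf2 hinner, integral_const_mul,
    integral_const_mul, integral_inner hfv, hu, real_inner_smul_right,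
    real_inner_self_eq_norm_sq]
  ring

theorem mul_integral_norm_sub_sq_mul_add_le (a : ℝ) (hf : 0 ≤ f) (hfi : Integrable f μ)
    (hf2 : Integrable (fun v => ‖v‖ ^ 2 * f v) μ) (hfv : Integrable (fun v => f v • v) μ)
    (hu : ∫ v, f v • v ∂μ = (∫ v, f v ∂μ) • u) :
    a * ∫ v, ‖v - u‖ ^ 2 * f v ∂μ + (∫ v, f v ∂μ) * ‖u‖ ^ 2 ≤
      max a 1 * ∫ v, ‖v‖ ^ 2 * f v ∂μ := calc
  _ ≤ max a 1 * ∫ v, ‖v - u‖ ^ 2 * f v ∂μ + max a 1 * ((∫ v, f v ∂μ) * ‖u‖ ^ 2) :=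
    add_le_add
      (mul_le_mul_of_nonneg_right (le_max_left _ _)
        (integral_nonneg fun v => mul_nonneg (sq_nonneg _) (hf v)))
      (le_mul_of_one_le_left (mul_nonneg (integral_nonneg hf) (sq_nonneg _)) (le_max_right _ _))
  _ = max a 1 * ∫ v, ‖v‖ ^ 2 * f v ∂μ := by
    rw [integral_norm_sub_sq_mul hfi hf2 hfv hu]; ring

end Variance

theorem mul_rpow_half_le_of_le_mul_div_rpow {n e B K p : ℝ} (hn : 0 < n) (he : 0 ≤ e)
    (hB : 0 ≤ B) (hK : 0 ≤ K) (hp : 0 < p) (h : e ≤ B * (K / n) ^ (2 / p)) :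
    n * e ^ (p / 2) ≤ B ^ (p / 2) * K := by
  have hx : 0 ≤ K / n := div_nonneg hK hn.le
  calc n * e ^ (p / 2) ≤ n * (B * (K / n) ^ (2 / p)) ^ (p / 2) := by gcongr
    _ = B ^ (p / 2) * K := by
      rw [Real.mul_rpow hB (by positivity), ← Real.rpow_mul hx,
        show 2 / p * (p / 2) = 1 by field_simp, Real.rpow_one]
      field_simp

theorem stmt_3_general (N : ℕ) (m : ℝ) (hm : 0 < m) (q : ℝ) (hq : (N : ℝ) + 2 < q) :
    ∃ C : ℝ, ∀ (f : EuclideanSpace ℝ (Fin N) → ℝ) (n T Nq : ℝ)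
      (u : EuclideanSpace ℝ (Fin N)),
      (∀ v, 0 ≤ f v) →
      Integrable (fun v => (1 + ‖v‖ ^ 2) * f v) →
      n = ∫ v, f v →
      0 < n →
      u = n⁻¹ • ∫ v, f v • v →
      T = m / (N * n) * ∫ v, ‖v - u‖ ^ 2 * f v →
      BddAbove (Set.range fun v => ‖v‖ ^ q * f v) →
      Nq = ⨆ v, ‖v‖ ^ q * f v →
      n * (T + ‖u‖ ^ 2) ^ ((q - N) / 2) ≤ C * Nq := by
  set c := ∫ w in {w : EuclideanSpace ℝ (Fin N) | 1 ≤ ‖w‖}, ‖w‖ ^ (2 - q)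
  set M := max (m / N) 1
  refine ⟨(M * (1 + c)) ^ ((q - N) / 2), ?_⟩
  intro f n T Nq u hf hint hn_def hn hu hT hbdd hNq
  have hfi := hint.of_one_add_norm_sq_mul
  have hf2 := hint.norm_sq_mul_of_one_add_norm_sq_mul
  have hK : ∀ v, ‖v‖ ^ q * f v ≤ Nq := fun v => hNq ▸ le_ciSup hbdd v
  have hmoment : ∫ v, ‖v‖ ^ 2 * f v ≤ (1 + c) * n * (Nq / n) ^ (2 / (q - N)) := by
    have := integral_norm_sq_mul_le hf hfi hf2 hK (by rwa [finrank_euclideanSpace_fin])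
      (hn_def ▸ hn)
    rwa [finrank_euclideanSpace_fin, ← hn_def] at this
  have henergy : n * (T + ‖u‖ ^ 2) ≤ M * ∫ v, ‖v‖ ^ 2 * f v := by
    rw [mul_add, hT, div_mul_eq_div_div, ← mul_assoc, mul_div_cancel₀ _ hn.ne', hn_def]
    refine mul_integral_norm_sub_sq_mul_add_le _ hf hfi hf2
      hint.smul_self_of_one_add_norm_sq_mul ?_
    rw [hu, ← hn_def, smul_inv_smul₀ hn.ne']
  have hT0 : 0 ≤ T :=
    hT ▸ mul_nonneg (by positivity) (integral_nonneg fun v => mul_nonneg (sq_nonneg _) (hf v))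
  refine mul_rpow_half_le_of_le_mul_div_rpow hn (by positivity) (by positivity)
    (nonneg_of_forall_norm_rpow_mul_le (by linarith) hK) (by linarith) ?_
  refine le_of_mul_le_mul_left ?_ hn
  have := mul_le_mul_of_nonneg_left hmoment (zero_le_one.trans (le_max_right (m / N) 1))
  linarith

/-- Estimate (ii.1): `n (T + |u|²)^{(q-N)/2} ≤ C_q N_q(f)` for `q > N + 2`. -/
theorem stmt_3 (N : ℕ) (hN : 1 ≤ N) (m : ℝ) (hm : 0 < m) (q : ℝ) (hq : (N : ℝ) + 2 < q) :
    ∃ C : ℝ, ∀ (f : EuclideanSpace ℝ (Fin N) → ℝ) (n T Nq : ℝ)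
      (u : EuclideanSpace ℝ (Fin N)),
      (∀ v, 0 ≤ f v) →
      Integrable (fun v => (1 + ‖v‖ ^ 2) * f v) →
      n = ∫ v, f v →
      0 < n →
      u = n⁻¹ • ∫ v, f v • v →
      T = m / (N * n) * ∫ v, ‖v - u‖ ^ 2 * f v →
      BddAbove (Set.range fun v => ‖v‖ ^ q * f v) →
      Nq = ⨆ v, ‖v‖ ^ q * f v →
      n * (T + ‖u‖ ^ 2) ^ ((q - N) / 2) ≤ C * Nq :=
  stmt_3_general N m hm q hq
end

section
/- Let $f_1, f_2 \ge 0$ with $(1+|v|^2)f_k \in L^1(\mathbb{R}^N)$, moments $n_k, u_k, T_k$ defined as usual with $n_1, n_2 > 0$. Let $u_{12} = \delta u_1 + (1-\delta)u_2$ and $T_{12} = \alpha T_1 + (1-\alpha)T_2 + \gamma|u_1 - u_2|^2$ with $\delta \in \mathbb{R}$, $0 < \alpha < 1$, $\gamma \ge 0$. Let $q > N+2$ and suppose $N_q(f_k) = \sup_v |v|^q f_k(v) < \infty$. Then there is a constant $C_q$ such that $n_1 (T_{12} + |u_{12}|^2)^{(q-N)/2} \le C_q\,(N_q(f_1) + \frac{n_1}{n_2}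 N_q(f_2))$. -/
open MeasureTheory
open scoped RealInnerProductSpace

lemma aux_meas {N : ℕ} (f : EuclideanSpace ℝ (Fin N) → ℝ) (hf : ∀ v, 0 ≤ f v)
    (hint : Integrable (fun v => (1 + ‖v‖ ^ 2) * f v)) :
    Integrable f ∧ Integrable (fun v => ‖v‖ ^ 2 * f v) ∧
      Integrable (fun v : EuclideanSpace ℝ (Fin N) => f v • v) := by
  have hc : Continuous fun v : EuclideanSpace ℝ (Fin N) => ((1 : ℝ) + ‖v‖ ^ 2)⁻¹ := by
    apply Continuous.inv₀ (by continuity)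
    intro v; positivity
  have haesm : AEStronglyMeasurable f volume := by
    have h1 : AEStronglyMeasurable
        (fun v : EuclideanSpace ℝ (Fin N) => ((1:ℝ) + ‖v‖ ^ 2)⁻¹ * ((1 + ‖v‖ ^ 2) * f v))
        volume := hc.aestronglyMeasurable.mul hint.1
    have h2 : (fun v : EuclideanSpace ℝ (Fin N) =>
        ((1:ℝ) + ‖v‖ ^ 2)⁻¹ * ((1 + ‖v‖ ^ 2) * f v)) = f := by
      funext v
      have hne : (1:ℝ) + ‖v‖ ^ 2 ≠ 0 := by positivity
      field_simp
    rwa [h2] at h1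
  refine ⟨?_, ?_, ?_⟩
  · refine hint.mono' haesm (Filter.Eventually.of_forall fun v => ?_)
    rw [Real.norm_eq_abs, abs_of_nonneg (hf v)]
    nlinarith [hf v, sq_nonneg ‖v‖]
  · refine hint.mono' ((continuous_norm.pow 2).aestronglyMeasurable.mul haesm)
      (Filter.Eventually.of_forall fun v => ?_)
    rw [Real.norm_eq_abs, abs_of_nonneg (mul_nonneg (by positivity) (hf v))]
    nlinarith [hf v, sq_nonneg ‖v‖]
  · refine hint.mono' (haesm.smul aestronglyMeasurable_id)
      (Filter.Eventually.of_forall fun v => ?_)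
    rw [norm_smul, Real.norm_eq_abs, abs_of_nonneg (hf v)]
    nlinarith [hf v, norm_nonneg v, sq_nonneg (‖v‖ - 1)]

lemma aux_var {N : ℕ} (f : EuclideanSpace ℝ (Fin N) → ℝ) (n : ℝ)
    (u : EuclideanSpace ℝ (Fin N)) (hf : ∀ v, 0 ≤ f v)
    (hint : Integrable (fun v => (1 + ‖v‖ ^ 2) * f v))
    (hn : n = ∫ v, f v) (hn0 : 0 < n)
    (hu : u = n⁻¹ • ∫ v, f v • v) :
    n * ‖u‖ ^ 2 ≤ ∫ v, ‖v‖ ^ 2 * f v ∧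
    (∫ v, ‖v - u‖ ^ 2 * f v) ≤ ∫ v, ‖v‖ ^ 2 * f v ∧
    0 ≤ ∫ v, ‖v - u‖ ^ 2 * f v := by
  obtain ⟨hf_int, hsq_int, hfv_int⟩ := aux_meas f hf hint
  have hI : (∫ v, f v • v) = n • u := by
    rw [hu, smul_inv_smul₀ hn0.ne']
  have hinner_int : Integrable (fun v => ⟪u, f v • v⟫) := hfv_int.const_inner u
  have key : (∫ v, ‖v - u‖ ^ 2 * f v) = (∫ v, ‖v‖ ^ 2 * f v) - n * ‖u‖ ^ 2 := by
    have hpt : (fun v : EuclideanSpace ℝ (Fin N) => ‖v - u‖ ^ 2 * f v)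
        = fun v => (‖v‖ ^ 2 * f v + ‖u‖ ^ 2 * f v) - 2 * ⟪u, f v • v⟫ := by
      funext v
      rw [real_inner_smul_right, @norm_sub_sq_real, real_inner_comm]
      ring
    have hadd : Integrable (fun v : EuclideanSpace ℝ (Fin N) => ‖v‖ ^ 2 * f v + ‖u‖ ^ 2 * f v) :=
      hsq_int.add (hf_int.const_mul (‖u‖^2))
    have hmul2 : Integrable (fun v : EuclideanSpace ℝ (Fin N) => 2 * ⟪u, f v • v⟫) :=
      hinner_int.const_mul 2
    rw [hpt, integral_sub hadd hmul2,
      integral_add hsq_int (hf_int.const_mul (‖u‖^2)), integral_const_mul, integral_const_mul,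
      integral_inner hfv_int, hI, real_inner_smul_right, real_inner_self_eq_norm_sq, ← hn]
    ring
  have hnn : 0 ≤ ∫ v, ‖v - u‖ ^ 2 * f v :=
    integral_nonneg fun v => mul_nonneg (by positivity) (hf v)
  have hval : 0 ≤ n * ‖u‖ ^ 2 := by positivity
  refine ⟨by linarith, by linarith, hnn⟩

/-- integrability of the truncated power tail -/
lemma aux_ind_int (N : ℕ) (q : ℝ) (hq : (N : ℝ) + 2 < q) (R : ℝ) (hR : 0 < R) :
    Integrable (fun v : EuclideanSpace ℝ (Fin N) =>
      if R < ‖v‖ then ‖v‖ ^ (2 - q) else 0) := by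
  have hfr : (Module.finrank ℝ (EuclideanSpace ℝ (Fin N)) : ℝ) < q - 2 := by
    rw [finrank_euclideanSpace_fin]; linarith
  have hmeas : Measurable (fun v : EuclideanSpace ℝ (Fin N) =>
      if R < ‖v‖ then ‖v‖ ^ (2 - q) else 0) := by
    exact Measurable.ite (measurableSet_lt measurable_const measurable_norm)
      (measurable_norm.pow_const _) measurable_const
  have hbase : Integrable (fun v : EuclideanSpace ℝ (Fin N) =>
      (1 + R⁻¹) ^ (q - 2) * (1 + ‖v‖) ^ (-(q - 2))) :=
    (integrable_one_add_norm hfr).const_mul _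
  refine hbase.mono' hmeas.aestronglyMeasurable (Filter.Eventually.of_forall fun v => ?_)
  rw [Real.norm_eq_abs]
  by_cases hv : R < ‖v‖
  · rw [if_pos hv, abs_of_nonneg (Real.rpow_nonneg (norm_nonneg v) _)]
    have h0 : (0:ℝ) < ‖v‖ := hR.trans hv
    have hA : (1 + ‖v‖) ^ (q - 2) ≤ (1 + R⁻¹) ^ (q - 2) * ‖v‖ ^ (q - 2) := by
      rw [← Real.mul_rpow (by positivity) h0.le]
      apply Real.rpow_le_rpow (by positivity) _ (by linarith)
      have h1 : (1:ℝ) ≤ R⁻¹ * ‖v‖ := by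
        rw [← div_eq_inv_mul, le_div_iff₀ hR]; linarith
      nlinarith
    have hx : (0:ℝ) < ‖v‖ ^ (q - 2) := Real.rpow_pos_of_pos h0 _
    have hy : (0:ℝ) < (1 + ‖v‖) ^ (q - 2) := Real.rpow_pos_of_pos (by positivity) _
    have hc : (0:ℝ) < (1 + R⁻¹) ^ (q - 2) := Real.rpow_pos_of_pos (by positivity) _
    have e1 : ‖v‖ ^ (2 - q) = (‖v‖ ^ (q - 2))⁻¹ := by
      rw [← Real.rpow_neg (norm_nonneg v)]; norm_num
    have e2 : (1 + ‖v‖) ^ (-(q - 2)) = ((1 + ‖v‖) ^ (q - 2))⁻¹ := by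
      rw [← Real.rpow_neg (by positivity : (0:ℝ) ≤ 1 + ‖v‖)]
    rw [e1, e2]
    calc (‖v‖ ^ (q - 2))⁻¹
        = ((1 + R⁻¹) ^ (q - 2) * ‖v‖ ^ (q - 2))⁻¹ * (1 + R⁻¹) ^ (q - 2) := by
          field_simp
      _ ≤ ((1 + ‖v‖) ^ (q - 2))⁻¹ * (1 + R⁻¹) ^ (q - 2) := by
          gcongr
      _ = (1 + R⁻¹) ^ (q - 2) * ((1 + ‖v‖) ^ (q - 2))⁻¹ := by ring
  · rw [if_neg hv, abs_zero]
    positivity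

lemma aux_tail (N : ℕ) (q : ℝ) (hq : (N : ℝ) + 2 < q) :
    ∃ J : ℝ, 0 ≤ J ∧
      ∀ (f : EuclideanSpace ℝ (Fin N) → ℝ) (Nq : ℝ), (∀ v, 0 ≤ f v) →
        Integrable (fun v => (1 + ‖v‖ ^ 2) * f v) →
        (∀ v, ‖v‖ ^ q * f v ≤ Nq) →
        ∀ R : ℝ, 0 < R →
          (∫ v, ‖v‖ ^ 2 * f v) ≤ R ^ 2 * (∫ v, f v)
            + Nq * J * R ^ ((N : ℝ) + 2 - q) := by
  classical
  set g : EuclideanSpace ℝ (Fin N) → ℝ :=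
    fun v => if 1 < ‖v‖ then ‖v‖ ^ (2 - q) else 0 with hg
  have hJ0 : 0 ≤ ∫ v, g v := by
    apply integral_nonneg
    intro v
    rw [hg]
    dsimp only
    split
    · exact Real.rpow_nonneg (norm_nonneg v) _
    · exact le_refl 0
  refine ⟨∫ v, g v, hJ0, ?_⟩
  intro f Nq hf hint hNq R hR
  obtain ⟨hf_int, hsq_int, -⟩ := aux_meas f hf hint
  -- the rescaled indicator
  have hcomp : ∀ v : EuclideanSpace ℝ (Fin N),
      (if R < ‖v‖ then ‖v‖ ^ (2 - q) else 0) = R ^ (2 - q) * g (R⁻¹ • v) := by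
    intro v
    have hnrm : ‖R⁻¹ • v‖ = R⁻¹ * ‖v‖ := by
      rw [norm_smul, Real.norm_eq_abs, abs_of_pos (inv_pos.2 hR)]
    have hcond : (1 < ‖R⁻¹ • v‖) ↔ (R < ‖v‖) := by
      rw [hnrm, ← div_eq_inv_mul, lt_div_iff₀ hR, one_mul]
    rw [hg]
    dsimp only
    by_cases hc : R < ‖v‖
    · rw [if_pos hc, if_pos (hcond.2 hc), hnrm,
        Real.mul_rpow (inv_pos.2 hR).le (norm_nonneg v), ← mul_assoc,
        ← Real.mul_rpow hR.le (inv_pos.2 hR).le, mul_inv_cancel₀ hR.ne', Real.one_rpow, one_mul]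
    · rw [if_neg hc, if_neg (fun h => hc (hcond.1 h)), mul_zero]
  have hIg : (∫ v : EuclideanSpace ℝ (Fin N), g (R⁻¹ • v)) = R ^ (N : ℕ) * ∫ v, g v := by
    have h := MeasureTheory.Measure.integral_comp_inv_smul_of_nonneg
      (volume : Measure (EuclideanSpace ℝ (Fin N))) g hR.le
    simpa [finrank_euclideanSpace_fin, smul_eq_mul] using h
  have hind_int : Integrable (fun v : EuclideanSpace ℝ (Fin N) =>
      if R < ‖v‖ then ‖v‖ ^ (2 - q) else 0) := aux_ind_int N q hq R hR
  have htail_val : (∫ v : EuclideanSpace ℝ (Fin N), (if R < ‖v‖ then ‖v‖ ^ (2 - q) else 0))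
      = R ^ ((N : ℝ) + 2 - q) * ∫ v, g v := by
    simp only [hcomp]
    rw [integral_const_mul, hIg, ← mul_assoc, ← Real.rpow_natCast R N, ← Real.rpow_add hR,
      show (2 - q + (N : ℝ)) = (N : ℝ) + 2 - q from by ring]
  -- pointwise bound
  have hpt : ∀ v : EuclideanSpace ℝ (Fin N),
      ‖v‖ ^ 2 * f v ≤ R ^ 2 * f v + Nq * (if R < ‖v‖ then ‖v‖ ^ (2 - q) else 0) := by
    intro v
    by_cases hc : R < ‖v‖
    · rw [if_pos hc]
      have h0 : (0:ℝ) < ‖v‖ := hR.trans hc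
      have key : ‖v‖ ^ 2 * f v = ‖v‖ ^ (2 - q) * (‖v‖ ^ q * f v) := by
        rw [← mul_assoc, ← Real.rpow_add h0, show (2 - q + q) = ((2:ℕ) : ℝ) from by norm_num,
          Real.rpow_natCast]
      have h1 : ‖v‖ ^ (2 - q) * (‖v‖ ^ q * f v) ≤ ‖v‖ ^ (2 - q) * Nq :=
        mul_le_mul_of_nonneg_left (hNq v) (Real.rpow_nonneg (norm_nonneg v) _)
      have h2 : 0 ≤ R ^ 2 * f v := mul_nonneg (sq_nonneg R) (hf v)
      rw [key]
      nlinarith [h1]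
    · rw [if_neg hc, mul_zero, add_zero]
      push_neg at hc
      exact mul_le_mul_of_nonneg_right (pow_le_pow_left₀ (norm_nonneg v) hc 2) (hf v)
  calc (∫ v, ‖v‖ ^ 2 * f v)
      ≤ ∫ v, (R ^ 2 * f v + Nq * (if R < ‖v‖ then ‖v‖ ^ (2 - q) else 0)) := by
        apply integral_mono hsq_int ((hf_int.const_mul (R ^ 2)).add (hind_int.const_mul Nq)) hpt
    _ = R ^ 2 * (∫ v, f v) + Nq * ((∫ v : EuclideanSpace ℝ (Fin N),
          (if R < ‖v‖ then ‖v‖ ^ (2 - q) else 0))) := by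
        rw [integral_add (hf_int.const_mul (R ^ 2)) (hind_int.const_mul Nq),
          integral_const_mul, integral_const_mul]
    _ = R ^ 2 * (∫ v, f v) + Nq * (∫ v, g v) * R ^ ((N : ℝ) + 2 - q) := by
        rw [htail_val]; ring


lemma aux_e5 {N : ℕ} (u v : EuclideanSpace ℝ (Fin N)) :
    ‖u - v‖ ^ 2 ≤ 2 * ‖u‖ ^ 2 + 2 * ‖v‖ ^ 2 := by
  nlinarith [norm_sub_le u v, norm_nonneg u, norm_nonneg v, norm_nonneg (u - v),
    sq_nonneg (‖u‖ - ‖v‖)]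

lemma aux_e6 {N : ℕ} (a b : ℝ) (u v : EuclideanSpace ℝ (Fin N)) :
    ‖a • u + b • v‖ ^ 2 ≤ 2 * a ^ 2 * ‖u‖ ^ 2 + 2 * b ^ 2 * ‖v‖ ^ 2 := by
  have h := norm_add_le (a • u) (b • v)
  rw [norm_smul, norm_smul, Real.norm_eq_abs, Real.norm_eq_abs] at h
  nlinarith [abs_nonneg a, abs_nonneg b, norm_nonneg u, norm_nonneg v,
    norm_nonneg (a • u + b • v), sq_abs a, sq_abs b, sq_nonneg (|a| * ‖u‖ - |b| * ‖v‖)]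

set_option maxHeartbeats 1000000 in
/-- Estimate (ii.2): `n₁ (T₁₂ + |u₁₂|²)^{(q-N)/2} ≤ C_q (N_q(f₁) + (n₁/n₂) N_q(f₂))`. -/
theorem stmt_4 (N : ℕ) (hN : 1 ≤ N) (m1 m2 : ℝ) (hm1 : 0 < m1) (hm2 : 0 < m2)
    (δ α γ : ℝ) (hα0 : 0 < α) (hα1 : α < 1) (hγ : 0 ≤ γ)
    (q : ℝ) (hq : (N : ℝ) + 2 < q) :
    ∃ C : ℝ, ∀ (f1 f2 : EuclideanSpace ℝ (Fin N) → ℝ) (n1 n2 T1 T2 Nq1 Nq2 : ℝ)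
      (u1 u2 : EuclideanSpace ℝ (Fin N)),
      (∀ v, 0 ≤ f1 v) → (∀ v, 0 ≤ f2 v) →
      Integrable (fun v => (1 + ‖v‖ ^ 2) * f1 v) →
      Integrable (fun v => (1 + ‖v‖ ^ 2) * f2 v) →
      n1 = ∫ v, f1 v → n2 = ∫ v, f2 v → 0 < n1 → 0 < n2 →
      u1 = n1⁻¹ • ∫ v, f1 v • v → u2 = n2⁻¹ • ∫ v, f2 v • v →
      T1 = m1 / (N * n1) * ∫ v, ‖v - u1‖ ^ 2 * f1 v →
      T2 = m2 / (N * n2) * ∫ v, ‖v - u2‖ ^ 2 * f2 v →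
      BddAbove (Set.range fun v => ‖v‖ ^ q * f1 v) →
      BddAbove (Set.range fun v => ‖v‖ ^ q * f2 v) →
      Nq1 = ⨆ v, ‖v‖ ^ q * f1 v →
      Nq2 = ⨆ v, ‖v‖ ^ q * f2 v →
      n1 * ((α * T1 + (1 - α) * T2 + γ * ‖u1 - u2‖ ^ 2)
            + ‖δ • u1 + (1 - δ) • u2‖ ^ 2) ^ ((q - N) / 2)
        ≤ C * (Nq1 + n1 / n2 * Nq2) := by
  obtain ⟨J, hJ0, hJ⟩ := aux_tail N q hq
  have hN0 : (0:ℝ) < N := by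
    have : (1:ℝ) ≤ N := by exact_mod_cast hN
    linarith
  have h1α : (0:ℝ) < 1 - α := by linarith
  obtain ⟨A1, hA1⟩ : ∃ x : ℝ, x = α * m1 / N + 2 * γ + 2 * δ ^ 2 := ⟨_, rfl⟩
  obtain ⟨A2, hA2⟩ : ∃ x : ℝ, x = (1 - α) * m2 / N + 2 * γ + 2 * (1 - δ) ^ 2 := ⟨_, rfl⟩
  have hA1pos : 0 < A1 := by
    rw [hA1]
    have := div_pos (mul_pos hα0 hm1) hN0
    nlinarith [sq_nonneg δ]
  have hA2pos : 0 < A2 := by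
    rw [hA2]
    have := div_pos (mul_pos h1α hm2) hN0
    nlinarith [sq_nonneg (1 - δ)]
  have hApos : 0 < A1 + A2 := by linarith
  have hβ : (0:ℝ) ≤ (q - N - 2) / 2 := by linarith
  refine ⟨2 * J * (2 * (A1 + A2)) ^ ((q - N - 2) / 2) * max A1 A2, ?_⟩
  have hCnn : (0:ℝ) ≤ 2 * J * (2 * (A1 + A2)) ^ ((q - N - 2) / 2) * max A1 A2 :=
    mul_nonneg (mul_nonneg (mul_nonneg two_pos.le hJ0)
      (Real.rpow_nonneg (by positivity) _)) (le_trans hA1pos.le (le_max_left _ _))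
  intro f1 f2 n1 n2 T1 T2 Nq1 Nq2 u1 u2 hf1 hf2 hint1 hint2 hn1 hn2 hn1p hn2p hu1 hu2
    hT1 hT2 hbd1 hbd2 hNq1 hNq2
  obtain ⟨hvar1a, hvar1b, hvar1c⟩ := aux_var f1 n1 u1 hf1 hint1 hn1 hn1p hu1
  obtain ⟨hvar2a, hvar2b, hvar2c⟩ := aux_var f2 n2 u2 hf2 hint2 hn2 hn2p hu2
  have hNq1v : ∀ v, ‖v‖ ^ q * f1 v ≤ Nq1 := fun v => hNq1 ▸ le_ciSup hbd1 v
  have hNq2v : ∀ v, ‖v‖ ^ q * f2 v ≤ Nq2 := fun v => hNq2 ▸ le_ciSup hbd2 v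
  have hNq1nn : 0 ≤ Nq1 :=
    le_trans (mul_nonneg (Real.rpow_nonneg (norm_nonneg _) q) (hf1 0)) (hNq1v 0)
  have hNq2nn : 0 ≤ Nq2 :=
    le_trans (mul_nonneg (Real.rpow_nonneg (norm_nonneg _) q) (hf2 0)) (hNq2v 0)
  have hS1nn : 0 ≤ ∫ v, ‖v‖ ^ 2 * f1 v :=
    integral_nonneg fun v => mul_nonneg (by positivity) (hf1 v)
  have hS2nn : 0 ≤ ∫ v, ‖v‖ ^ 2 * f2 v :=
    integral_nonneg fun v => mul_nonneg (by positivity) (hf2 v)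
  have hT1nn : 0 ≤ T1 := by
    rw [hT1]
    exact mul_nonneg (div_nonneg hm1.le (mul_nonneg hN0.le hn1p.le)) hvar1c
  have hT2nn : 0 ≤ T2 := by
    rw [hT2]
    exact mul_nonneg (div_nonneg hm2.le (mul_nonneg hN0.le hn2p.le)) hvar2c
  -- E ≥ 0
  have hEnn : 0 ≤ (α * T1 + (1 - α) * T2 + γ * ‖u1 - u2‖ ^ 2)
      + ‖δ • u1 + (1 - δ) • u2‖ ^ 2 := by
    have h1 := mul_nonneg hα0.le hT1nn
    have h2 := mul_nonneg h1α.le hT2nn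
    have h3 := mul_nonneg hγ (sq_nonneg ‖u1 - u2‖)
    have h4 := sq_nonneg ‖δ • u1 + (1 - δ) • u2‖
    clear * - h1 h2 h3 h4
    linarith
  -- n1*T1 etc
  have G1 : n1 * T1 ≤ m1 / N * ∫ v, ‖v‖ ^ 2 * f1 v := by
    have e : n1 * T1 = m1 / N * ∫ v, ‖v - u1‖ ^ 2 * f1 v := by
      rw [hT1]; field_simp [hn1p.ne', hN0.ne']
    rw [e]
    exact mul_le_mul_of_nonneg_left hvar1b (div_nonneg hm1.le hN0.le)
  have G2' : n1 * T2 ≤ (n1 / n2) * (m2 / N * ∫ v, ‖v‖ ^ 2 * f2 v) := by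
    have e : n1 * T2 = (n1 / n2) * (m2 / N * ∫ v, ‖v - u2‖ ^ 2 * f2 v) := by
      rw [hT2]; ring
    rw [e]
    refine mul_le_mul_of_nonneg_left ?_ (div_nonneg hn1p.le hn2p.le)
    exact mul_le_mul_of_nonneg_left hvar2b (div_nonneg hm2.le hN0.le)
  have H1 : n1 * ‖u2‖ ^ 2 ≤ (n1 / n2) * ∫ v, ‖v‖ ^ 2 * f2 v := by
    have e : n1 * ‖u2‖ ^ 2 = (n1 / n2) * (n2 * ‖u2‖ ^ 2) := by
      field_simp [hn2p.ne']
    rw [e]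
    exact mul_le_mul_of_nonneg_left hvar2a (div_nonneg hn1p.le hn2p.le)
  have e5 : ‖u1 - u2‖ ^ 2 ≤ 2 * ‖u1‖ ^ 2 + 2 * ‖u2‖ ^ 2 := by
    clear * -
    nlinarith [norm_sub_le u1 u2, norm_nonneg u1, norm_nonneg u2, norm_nonneg (u1 - u2),
      sq_nonneg (‖u1‖ - ‖u2‖)]
  have e6 : ‖δ • u1 + (1 - δ) • u2‖ ^ 2 ≤ 2 * δ ^ 2 * ‖u1‖ ^ 2 + 2 * (1 - δ) ^ 2 * ‖u2‖ ^ 2 := by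
    clear * -
    have h := norm_add_le (δ • u1) ((1 - δ) • u2)
    rw [norm_smul, norm_smul, Real.norm_eq_abs, Real.norm_eq_abs] at h
    nlinarith [abs_nonneg δ, abs_nonneg (1 - δ), norm_nonneg u1, norm_nonneg u2,
      norm_nonneg (δ • u1 + (1 - δ) • u2), sq_abs δ, sq_abs (1 - δ),
      sq_nonneg (|δ| * ‖u1‖ - |1 - δ| * ‖u2‖)]
  have hb : n1 * ((α * T1 + (1 - α) * T2 + γ * ‖u1 - u2‖ ^ 2)
        + ‖δ • u1 + (1 - δ) • u2‖ ^ 2)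
      ≤ A1 * (∫ v, ‖v‖ ^ 2 * f1 v) + A2 * ((n1 / n2) * ∫ v, ‖v‖ ^ 2 * f2 v) := by
    rw [hA1, hA2]
    have c1 := mul_le_mul_of_nonneg_left G1 hα0.le
    have c2 := mul_le_mul_of_nonneg_left G2' h1α.le
    have c3 := mul_le_mul_of_nonneg_left e5 (mul_nonneg hγ hn1p.le)
    have c4 := mul_le_mul_of_nonneg_left e6 hn1p.le
    have c5 := mul_le_mul_of_nonneg_left hvar1a (by positivity : (0:ℝ) ≤ 2 * γ)
    have c6 := mul_le_mul_of_nonneg_left H1 (by positivity : (0:ℝ) ≤ 2 * γ)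
    have c7 := mul_le_mul_of_nonneg_left hvar1a (by positivity : (0:ℝ) ≤ 2 * δ ^ 2)
    have c8 := mul_le_mul_of_nonneg_left H1 (by positivity : (0:ℝ) ≤ 2 * (1 - δ) ^ 2)
    clear * - c1 c2 c3 c4 c5 c6 c7 c8
    ring_nf at c1 c2 c3 c4 c5 c6 c7 c8 ⊢
    linarith
  obtain ⟨EE, hEE⟩ : ∃ x : ℝ, x = (α * T1 + (1 - α) * T2 + γ * ‖u1 - u2‖ ^ 2)
      + ‖δ • u1 + (1 - δ) • u2‖ ^ 2 := ⟨_, rfl⟩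
  rw [← hEE] at hEnn hb ⊢
  rcases eq_or_lt_of_le hEnn with hE0 | hEpos
  · have hexp : (0:ℝ) < (q - (N:ℝ)) / 2 := by linarith
    rw [← hE0, Real.zero_rpow hexp.ne']
    · rw [mul_zero]
      exact mul_nonneg hCnn (add_nonneg hNq1nn (mul_nonneg (div_nonneg hn1p.le hn2p.le) hNq2nn))
  · have hX0 : 0 < EE / (2*(A1+A2)) := div_pos hEpos (by linarith)
    obtain ⟨R, hRdef⟩ : ∃ R : ℝ, R = Real.sqrt (EE / (2*(A1+A2))) := ⟨_, rfl⟩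
    have hRpos : 0 < R := by rw [hRdef]; exact Real.sqrt_pos.2 hX0
    have hR2 : R ^ 2 = EE / (2*(A1+A2)) := by rw [hRdef]; exact Real.sq_sqrt hX0.le
    have tail1 := hJ f1 Nq1 hf1 hint1 hNq1v R hRpos
    have tail2 := hJ f2 Nq2 hf2 hint2 hNq2v R hRpos
    rw [← hn1] at tail1
    rw [← hn2] at tail2
    have tail2' : (n1/n2) * (∫ v, ‖v‖ ^ 2 * f2 v)
        ≤ R ^ 2 * n1 + (n1/n2) * (Nq2 * J * R ^ ((N:ℝ)+2-q)) := by
      have h := mul_le_mul_of_nonneg_left tail2 (div_nonneg hn1p.le hn2p.le)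
      have e : (n1/n2) * (R ^ 2 * n2 + Nq2 * J * R ^ ((N:ℝ)+2-q))
          = R ^ 2 * n1 + (n1/n2) * (Nq2 * J * R ^ ((N:ℝ)+2-q)) := by
        field_simp [hn2p.ne']
      rw [e] at h
      exact h
    have step2 : n1 * EE ≤ 2 * (A1*Nq1 + A2*((n1/n2)*Nq2)) * (J * R ^ ((N:ℝ)+2-q)) := by
      have step : n1 * EE ≤ (A1+A2) * (R^2*n1)
          + (A1*Nq1 + A2*((n1/n2)*Nq2)) * (J * R ^ ((N:ℝ)+2-q)) := by
        have c1 := mul_le_mul_of_nonneg_left tail1 hA1pos.le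
        have c2 := mul_le_mul_of_nonneg_left tail2' hA2pos.le
        have c3 := hb
        clear * - c1 c2 c3
        ring_nf at c1 c2 c3 ⊢
        linarith
      have hAR : (A1+A2) * (R^2*n1) = n1 * EE / 2 := by
        rw [hR2]; field_simp [hApos.ne']
      clear * - step hAR
      ring_nf at step hAR ⊢
      linarith
    have h1 : R ^ ((N:ℝ)+2-q) = (EE / (2*(A1+A2))) ^ (((N:ℝ)+2-q)/2) := by
      rw [hRdef, Real.sqrt_eq_rpow, ← Real.rpow_mul hX0.le,
        show (1/2 : ℝ) * ((N:ℝ)+2-q) = ((N:ℝ)+2-q)/2 from by ring]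
    have h2 : (EE / (2*(A1+A2))) ^ (((N:ℝ)+2-q)/2)
        = EE ^ (((N:ℝ)+2-q)/2) * (2*(A1+A2)) ^ ((q-(N:ℝ)-2)/2) := by
      rw [Real.div_rpow hEpos.le (by positivity : (0:ℝ) ≤ 2*(A1+A2)), div_eq_mul_inv,
        ← Real.rpow_neg (by positivity : (0:ℝ) ≤ 2*(A1+A2)),
        show -(((N:ℝ)+2-q)/2) = (q-(N:ℝ)-2)/2 from by ring]
    have h3 : EE ^ (((N:ℝ)+2-q)/2) * EE ^ ((q-(N:ℝ)-2)/2) = 1 := by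
      rw [← Real.rpow_add hEpos,
        show ((N:ℝ)+2-q)/2 + (q-(N:ℝ)-2)/2 = 0 from by ring, Real.rpow_zero]
    have hEpow : EE ^ ((q-(N:ℝ))/2) = EE * EE ^ ((q-(N:ℝ)-2)/2) := by
      rw [show (q-(N:ℝ))/2 = 1 + (q-(N:ℝ)-2)/2 from by ring, Real.rpow_add hEpos,
        Real.rpow_one]
    have hEβ : (0:ℝ) ≤ EE ^ ((q-(N:ℝ)-2)/2) := Real.rpow_nonneg hEpos.le _
    have main1 : n1 * EE ^ ((q-(N:ℝ))/2)
        ≤ 2 * (A1*Nq1 + A2*((n1/n2)*Nq2)) * J * (2*(A1+A2)) ^ ((q-(N:ℝ)-2)/2) := by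
      have hmul := mul_le_mul_of_nonneg_right step2 hEβ
      calc n1 * EE ^ ((q-(N:ℝ))/2) = n1 * EE * EE ^ ((q-(N:ℝ)-2)/2) := by rw [hEpow]; ring
        _ ≤ 2 * (A1*Nq1 + A2*((n1/n2)*Nq2)) * (J * R ^ ((N:ℝ)+2-q))
              * EE ^ ((q-(N:ℝ)-2)/2) := hmul
        _ = 2 * (A1*Nq1 + A2*((n1/n2)*Nq2)) * J *
              ((EE ^ (((N:ℝ)+2-q)/2) * EE ^ ((q-(N:ℝ)-2)/2))
                * (2*(A1+A2)) ^ ((q-(N:ℝ)-2)/2)) := by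
            rw [h1, h2]; ring
        _ = 2 * (A1*Nq1 + A2*((n1/n2)*Nq2)) * J
              * (2*(A1+A2)) ^ ((q-(N:ℝ)-2)/2) := by
            rw [h3]; ring
    have hG : A1*Nq1 + A2*((n1/n2)*Nq2) ≤ max A1 A2 * (Nq1 + n1/n2*Nq2) := by
      have hd : 0 ≤ n1/n2 * Nq2 := mul_nonneg (div_nonneg hn1p.le hn2p.le) hNq2nn
      have c1 := mul_le_mul_of_nonneg_right (le_max_left A1 A2) hNq1nn
      have c2 := mul_le_mul_of_nonneg_right (le_max_right A1 A2) hd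
      clear * - c1 c2
      ring_nf at c1 c2 ⊢
      linarith
    have hcoef : (0:ℝ) ≤ 2 * J * (2*(A1+A2)) ^ ((q-(N:ℝ)-2)/2) :=
      mul_nonneg (mul_nonneg two_pos.le hJ0) (Real.rpow_nonneg (by positivity) _)
    calc n1 * EE ^ ((q-(N:ℝ))/2)
        ≤ 2 * (A1*Nq1 + A2*((n1/n2)*Nq2)) * J * (2*(A1+A2)) ^ ((q-(N:ℝ)-2)/2) := main1
      _ ≤ 2 * J * (2*(A1+A2)) ^ ((q-(N:ℝ)-2)/2) * max A1 A2 * (Nq1 + n1/n2*Nq2) := by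
          have c1 := mul_le_mul_of_nonneg_left hG hcoef
          clear * - c1
          ring_nf at c1 ⊢
          linarith
end

section
/- Let $u_1, u_2 \in \mathbb{R}^3$ with $u_1 \ne u_2$, and suppose $m_1, \nu_{12}, n_1, n_2, \lambda_u > 0$, $\delta = 1 - \frac{\lambda_u}{m_1 \nu_{12} n_1 n_2} < 1$. Suppose $U: \mathbb{R}^3 \times \mathbb{R}^3 \to \mathbb{R}^3$ and $\gamma \in \mathbb{R}$ satisfy the energy-exchange matching identity $\left[\tfrac{1}{2}\nu_{12} n_1 n_2 m_1(\delta - 1)(u_1 + u_2 + \delta(u_1 - u_2)) + \tfrac{3}{2}\nu_{12} n_1 n_2 \gamma (u_1 - u_2) + \lambda_u U(u_1, u_2)\right] \cdot (u_1 - u_2) = 0$, with $\gamma$ a constant independent of $u_1, u_2$. Then the component of $U$ parallel to $u_1 - u_2$ is $\left(\frac{1}{2}\frac{(u_1+u_2)\cdot(u_1-u_2)}{|u_1-u_2|^2} - c\right)(u_1 - u_2)$ for some constant $c \in \mathbb{R}$, and $\gamma = \frac{1}{3} m_1 (1-\delta)\delta + \frac{2}{3} m_1 (1-\delta) c$. 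-/
/-!
Writing `lu = K (1 - δ)` with `K = m₁ ν₁₂ n₁ n₂`, the matching identity is linear in
`⟪U, u₁ - u₂⟫` with the nonzero coefficient `lu`, so it determines that inner product as
`½ ⟪u₁ + u₂, u₁ - u₂⟫ - c ‖u₁ - u₂‖²`, where `c` is an affine function of the constant `γ`;
solving for `γ` gives the stated relation.
-/

open RealInnerProductSpace

noncomputable def exchangeConst (m1 γ δ : ℝ) : ℝ :=
  (3 * γ - m1 * (1 - δ) * δ) / (2 * m1 * (1 - δ))

lemma eq_mul_one_sub_of_eq_one_sub_div {a K δ : ℝ} (hδ : δ = 1 - a / K) (hδ1 : δ < 1) :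
    K ≠ 0 ∧ a = K * (1 - δ) := by
  have hpos : 0 < a / K := by linarith
  have hK : K ≠ 0 := by rintro rfl; simp at hpos
  exact ⟨hK, by rw [hδ]; field_simp; ring⟩

lemma eq_of_exchangeConst {m1 γ δ : ℝ} (hm1 : m1 ≠ 0) (hδ : δ ≠ 1) :
    γ = 1 / 3 * m1 * (1 - δ) * δ + 2 / 3 * m1 * (1 - δ) * exchangeConst m1 γ δ := by
  have : 1 - δ ≠ 0 := sub_ne_zero.mpr hδ.symm
  unfold exchangeConst
  field_simp
  ring

lemma inner_eq_of_matching {E : Type*} [NormedAddCommGroup E] [InnerProductSpace ℝ E]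
    {m1 ν12 n1 n2 γ δ : ℝ} (hK : m1 * ν12 * n1 * n2 ≠ 0) (hδ : δ ≠ 1) {u1 u2 V : E}
    (h : ⟪(1 / 2 * ν12 * n1 * n2 * m1 * (δ - 1)) • (u1 + u2 + δ • (u1 - u2))
          + (3 / 2 * ν12 * n1 * n2 * γ) • (u1 - u2)
          + (m1 * ν12 * n1 * n2 * (1 - δ)) • V, u1 - u2⟫ = 0) :
    ⟪V, u1 - u2⟫ = 1 / 2 * ⟪u1 + u2, u1 - u2⟫ - exchangeConst m1 γ δ * ‖u1 - u2‖ ^ 2 := by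
  have hm1 : m1 ≠ 0 := left_ne_zero_of_mul (left_ne_zero_of_mul (left_ne_zero_of_mul hK))
  have hγ := eq_of_exchangeConst (γ := γ) hm1 hδ
  simp only [inner_add_left, real_inner_smul_left, real_inner_self_eq_norm_sq] at h ⊢
  apply mul_left_cancel₀ (mul_ne_zero hK (sub_ne_zero.mpr hδ.symm))
  linear_combination h - (3 / 2 * ν12 * n1 * n2 * ‖u1 - u2‖ ^ 2) * hγ

lemma smul_eq_of_inner_eq {E : Type*} [NormedAddCommGroup E] [InnerProductSpace ℝ E]
    {V s d : E} {c : ℝ} (h : ⟪V, d⟫ = 1 / 2 * ⟪s, d⟫ - c * ‖d‖ ^ 2) :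
    (⟪V, d⟫ / ‖d‖ ^ 2) • d = (1 / 2 * (⟪s, d⟫ / ‖d‖ ^ 2) - c) • d := by
  rcases eq_or_ne d 0 with rfl | hd
  · simp
  · have : ‖d‖ ≠ 0 := norm_ne_zero_iff.mpr hd
    rw [h]
    congr 1
    field_simp

theorem stmt_12_general (m1 ν12 n1 n2 lu γ δ : ℝ)
    (hδ : δ = 1 - lu / (m1 * ν12 * n1 * n2)) (hδ1 : δ < 1)
    (U : EuclideanSpace ℝ (Fin 3) → EuclideanSpace ℝ (Fin 3) → EuclideanSpace ℝ (Fin 3))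
    (hmatch : ∀ u1 u2 : EuclideanSpace ℝ (Fin 3), u1 ≠ u2 →
      (inner ℝ ((1 / 2 * ν12 * n1 * n2 * m1 * (δ - 1)) • (u1 + u2 + δ • (u1 - u2))
          + (3 / 2 * ν12 * n1 * n2 * γ) • (u1 - u2) + lu • U u1 u2) (u1 - u2) : ℝ) = 0) :
    ∃ c : ℝ, γ = 1 / 3 * m1 * (1 - δ) * δ + 2 / 3 * m1 * (1 - δ) * c ∧
      ∀ u1 u2 : EuclideanSpace ℝ (Fin 3), u1 ≠ u2 →
        ((inner ℝ (U u1 u2) (u1 - u2) : ℝ) / ‖u1 - u2‖ ^ 2) • (u1 - u2)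
          = (1 / 2 * ((inner ℝ (u1 + u2) (u1 - u2) : ℝ) / ‖u1 - u2‖ ^ 2) - c) • (u1 - u2) := by
  obtain ⟨hK, rfl⟩ := eq_mul_one_sub_of_eq_one_sub_div hδ hδ1
  have hm1 : m1 ≠ 0 := left_ne_zero_of_mul (left_ne_zero_of_mul (left_ne_zero_of_mul hK))
  refine ⟨exchangeConst m1 γ δ, eq_of_exchangeConst hm1 hδ1.ne, fun u1 u2 hne => ?_⟩
  exact smul_eq_of_inner_eq (inner_eq_of_matching hK hδ1.ne (hmatch u1 u2 hne))

/-- Theorem 5.2: matching the BGK energy exchange with Dellacherie's term determines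
the component of `U` parallel to `u₁-u₂` and fixes `γ` in terms of a constant `c`. -/
theorem stmt_12 (m1 ν12 n1 n2 lu γ δ : ℝ)
    (hm1 : 0 < m1) (hν : 0 < ν12) (hn1 : 0 < n1) (hn2 : 0 < n2) (hlu : 0 < lu)
    (hδ : δ = 1 - lu / (m1 * ν12 * n1 * n2)) (hδ1 : δ < 1)
    (U : EuclideanSpace ℝ (Fin 3) → EuclideanSpace ℝ (Fin 3) → EuclideanSpace ℝ (Fin 3))
    (hmatch : ∀ u1 u2 : EuclideanSpace ℝ (Fin 3), u1 ≠ u2 →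
      (inner ℝ ((1 / 2 * ν12 * n1 * n2 * m1 * (δ - 1)) • (u1 + u2 + δ • (u1 - u2))
          + (3 / 2 * ν12 * n1 * n2 * γ) • (u1 - u2) + lu • U u1 u2) (u1 - u2) : ℝ) = 0) :
    ∃ c : ℝ, γ = 1 / 3 * m1 * (1 - δ) * δ + 2 / 3 * m1 * (1 - δ) * c ∧
      ∀ u1 u2 : EuclideanSpace ℝ (Fin 3), u1 ≠ u2 →
        ((inner ℝ (U u1 u2) (u1 - u2) : ℝ) / ‖u1 - u2‖ ^ 2) • (u1 - u2)
          = (1 / 2 * ((inner ℝ (u1 + u2) (u1 - u2) : ℝ) / ‖u1 - u2‖ ^ 2) - c) • (u1 - u2) :=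
  stmt_12_general m1 ν12 n1 n2 lu γ δ hδ hδ1 U hmatch
end

section
/- Let $n_1^i, n_2^i > 0$ and $u_1^i, u_2^i \in \mathbb{R}^N$ for $i = 1, 2$, and for $\Theta \in [0,1]$ set $n_k^\Theta = \Theta n_k^1 + (1-\Theta) n_k^2$. Let $0 \le \alpha \le 1$ and suppose $|u_k^i| \le M$ for all $k, i$ and some $M > 0$. Then $\frac{n_1^\Theta n_2^\Theta}{n_1^\Theta + n_2^\Theta}\,\big|(\alpha u_1^1 + (1-\alpha)u_2^1) - (\alpha u_1^2 + (1-\alpha)u_2^2)\big| \le C\left( |n_1^1 u_1^1 - n_1^2 u_1^2| + |n_2^1 u_2^1 - n_2^2 u_2^2| + |n_1^1 - n_1^2| + |n_2^1 - n_2^2| \right)$ for a constant $C$ depending only on $M$. -/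
set_option maxHeartbeats 2000000 in
/-- Step 5 Lipschitz estimate: the mixture-velocity difference weighted by the
harmonic-mean density factor is controlled by differences of first moments and
densities, with a constant depending only on the velocity bound `M`. -/
theorem stmt_15 (N : ℕ) (hN : 1 ≤ N) (M : ℝ) (hM : 0 < M) :
    ∃ C : ℝ, 0 < C ∧
      ∀ (α Θ : ℝ) (n1 n2 n1' n2' : ℝ) (u1 u2 u1' u2' : EuclideanSpace ℝ (Fin N)),
        0 ≤ α → α ≤ 1 → 0 ≤ Θ → Θ ≤ 1 →
        0 < n1 → 0 < n2 → 0 < n1' → 0 < n2' →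
        ‖u1‖ ≤ M → ‖u2‖ ≤ M → ‖u1'‖ ≤ M → ‖u2'‖ ≤ M →
        ((Θ * n1 + (1 - Θ) * n1') * (Θ * n2 + (1 - Θ) * n2')
              / ((Θ * n1 + (1 - Θ) * n1') + (Θ * n2 + (1 - Θ) * n2')))
            * ‖(α • u1 + (1 - α) • u2) - (α • u1' + (1 - α) • u2')‖
          ≤ C * (‖n1 • u1 - n1' • u1'‖ + ‖n2 • u2 - n2' • u2'‖
              + |n1 - n1'| + |n2 - n2'|) := by
  refine ⟨1 + M, by linarith, ?_⟩
  intro α Θ n1 n2 n1' n2' u1 u2 u1' u2' hα0 hα1 hΘ0 hΘ1 h1 h2 h1' h2' hb1 hb2 hb1' hb2'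
  set a1 := Θ * n1 + (1 - Θ) * n1' with ha1
  set a2 := Θ * n2 + (1 - Θ) * n2' with ha2
  have hΘ1' : (0:ℝ) ≤ 1 - Θ := by linarith
  have ha1pos : 0 < a1 := by
    have h := lt_min h1 h1'
    have t1 := mul_le_mul_of_nonneg_left (min_le_left n1 n1') hΘ0
    have t2 := mul_le_mul_of_nonneg_left (min_le_right n1 n1') hΘ1'
    rw [ha1]; nlinarith
  have ha2pos : 0 < a2 := by
    have h := lt_min h2 h2'
    have t1 := mul_le_mul_of_nonneg_left (min_le_left n2 n2') hΘ0
    have t2 := mul_le_mul_of_nonneg_left (min_le_right n2 n2') hΘ1'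
    rw [ha2]; nlinarith
  have hfac1 : a1 * a2 / (a1 + a2) ≤ a1 := by
    rw [div_le_iff₀ (by linarith)]; nlinarith
  have hfac2 : a1 * a2 / (a1 + a2) ≤ a2 := by
    rw [div_le_iff₀ (by linarith)]; nlinarith
  have hfac0 : 0 ≤ a1 * a2 / (a1 + a2) := by positivity
  -- per-species bound
  have key : ∀ (n n' : ℝ) (u u' : EuclideanSpace ℝ (Fin N)), 0 < n → 0 < n' →
      ‖u‖ ≤ M → ‖u'‖ ≤ M →
      n * ‖u - u'‖ ≤ ‖n • u - n' • u'‖ + M * |n - n'| ∧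
      n' * ‖u - u'‖ ≤ ‖n • u - n' • u'‖ + M * |n - n'| := by
    intro n n' u u' hn hn' hu hu'
    constructor
    · calc n * ‖u - u'‖ = ‖n • (u - u')‖ := by
            rw [norm_smul, Real.norm_eq_abs, abs_of_pos hn]
      _ = ‖(n • u - n' • u') - (n - n') • u'‖ := by congr 1; module
      _ ≤ ‖n • u - n' • u'‖ + ‖(n - n') • u'‖ := norm_sub_le _ _
      _ ≤ ‖n • u - n' • u'‖ + M * |n - n'| := by
          rw [norm_smul, Real.norm_eq_abs]
          nlinarith [abs_nonneg (n - n'), norm_nonneg u']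
    · calc n' * ‖u - u'‖ = ‖n' • (u - u')‖ := by
            rw [norm_smul, Real.norm_eq_abs, abs_of_pos hn']
      _ = ‖(n • u - n' • u') - (n - n') • u‖ := by congr 1; module
      _ ≤ ‖n • u - n' • u'‖ + ‖(n - n') • u‖ := norm_sub_le _ _
      _ ≤ ‖n • u - n' • u'‖ + M * |n - n'| := by
          rw [norm_smul, Real.norm_eq_abs]
          nlinarith [abs_nonneg (n - n'), norm_nonneg u]
  obtain ⟨k11, k12⟩ := key n1 n1' u1 u1' h1 h1' hb1 hb1'
  obtain ⟨k21, k22⟩ := key n2 n2' u2 u2' h2 h2' hb2 hb2'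
  set d1 := ‖u1 - u1'‖ with hd1
  set d2 := ‖u2 - u2'‖ with hd2
  set D := ‖(α • u1 + (1 - α) • u2) - (α • u1' + (1 - α) • u2')‖ with hD
  set B1 := ‖n1 • u1 - n1' • u1'‖ + M * |n1 - n1'| with hB1def
  set B2 := ‖n2 • u2 - n2' • u2'‖ + M * |n2 - n2'| with hB2def
  have hB1nn : 0 ≤ B1 := by positivity
  have hB2nn : 0 ≤ B2 := by positivity
  have hA1 : a1 * d1 ≤ B1 := by
    have t1 := mul_le_mul_of_nonneg_left k11 hΘ0
    have t2 := mul_le_mul_of_nonneg_left k12 hΘ1'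
    rw [ha1]; nlinarith [t1, t2]
  have hA2 : a2 * d2 ≤ B2 := by
    have t1 := mul_le_mul_of_nonneg_left k21 hΘ0
    have t2 := mul_le_mul_of_nonneg_left k22 hΘ1'
    rw [ha2]; nlinarith [t1, t2]
  have hd : D ≤ α * d1 + (1 - α) * d2 := by
    rw [hD, hd1, hd2]
    have he : (α • u1 + (1 - α) • u2) - (α • u1' + (1 - α) • u2')
        = α • (u1 - u1') + (1 - α) • (u2 - u2') := by module
    rw [he]
    calc ‖α • (u1 - u1') + (1 - α) • (u2 - u2')‖
        ≤ ‖α • (u1 - u1')‖ + ‖(1 - α) • (u2 - u2')‖ := norm_add_le _ _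
      _ = α * d1 + (1 - α) * d2 := by
          rw [norm_smul, norm_smul, Real.norm_eq_abs, Real.norm_eq_abs,
            abs_of_nonneg hα0, abs_of_nonneg (by linarith : (0:ℝ) ≤ 1 - α)]
  set F := a1 * a2 / (a1 + a2) with hF
  have step1 : F * D
      ≤ α * (F * d1) + (1 - α) * (F * d2) := by
    have := mul_le_mul_of_nonneg_left hd hfac0
    nlinarith
  have s3 : F * d1 ≤ B1 :=
    le_trans (mul_le_mul_of_nonneg_right hfac1 (norm_nonneg _)) hA1
  have s4 : F * d2 ≤ B2 :=
    le_trans (mul_le_mul_of_nonneg_right hfac2 (norm_nonneg _)) hA2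
  have t1 : α * (F * d1) ≤ α * B1 := mul_le_mul_of_nonneg_left s3 hα0
  have t2 : (1 - α) * (F * d2) ≤ (1 - α) * B2 :=
    mul_le_mul_of_nonneg_left s4 (by linarith)
  have hfin : F * D ≤ B1 + B2 := by
    nlinarith
  have hgoal : B1 + B2 ≤ (1 + M) * (‖n1 • u1 - n1' • u1'‖ + ‖n2 • u2 - n2' • u2'‖
      + |n1 - n1'| + |n2 - n2'|) := by
    rw [hB1def, hB2def]
    nlinarith [norm_nonneg (n1 • u1 - n1' • u1'), norm_nonneg (n2 • u2 - n2' • u2'),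
      abs_nonneg (n1 - n1'), abs_nonneg (n2 - n2')]
  calc F * D ≤ B1 + B2 := hfin
    _ ≤ _ := hgoal
end
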